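/- arXiv:1202.0972 — 8 statements merged into one kernel-verified Lean document; each statement's English description precedes it below -/
import Mathlib

section
/- For every P ∈ ℂ³, the dual mass norm minus the normal component equals twice the kinetic energy: m·(|P₁₂|²/(m₁m₂) + |P₃₁|²/(m₃m₁) + |P₂₃|²/(m₂m₃)) − |m₃·conj(P₁₂)·1 + m₂·conj(P₃₁)·1 + m₁·conj(P₂₃)·1|²/(m₁m₂m₃) = 2K(P); equivalently, |P|²_* − |⟨P,N⟩|²/|N|²ₘ = 2K(P), where N = (m₃,m₂,m₁) and |N|²ₘ = m₁m₂m₃. -/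
/-!
Multiplying by `m₁m₂m₃`, the identity becomes the weighted variance identity
`(∑ w)(∑ w |x|²) - |∑ w x|² = ∑_{k<l} w_k w_l |x_k - x_l|²` for the weights
`w = N = (m₃, m₂, m₁)` and the points `x = P`: indeed `m₁m₂m₃ |P|²_* = m ∑ N_k |P_k|²`,
and `2 m₁m₂m₃ K(P) = ∑_{k<l} N_k N_l |P_k - P_l|²`. The variance identity itself comes from
expanding `‖x_i - x_j‖²` in the double sum.
-/

noncomputable section
open Complex ComplexConjugate

/-- Kinetic energy form `K(P)`. -/
def KE (m₁ m₂ m₃ : ℝ) (P : ℂ × ℂ × ℂ) : ℝ :=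
  Complex.normSq (P.1 - P.2.1) / (2 * m₁) + Complex.normSq (P.2.2 - P.1) / (2 * m₂) +
    Complex.normSq (P.2.1 - P.2.2) / (2 * m₃)

theorem Finset.sum_sum_mul_norm_sub_sq {ι E : Type*} [SeminormedAddCommGroup E]
    [InnerProductSpace ℝ E] (s : Finset ι) (w : ι → ℝ) (x : ι → E) :
    ∑ i ∈ s, ∑ j ∈ s, w i * w j * ‖x i - x j‖ ^ 2 =
      2 * ((∑ i ∈ s, w i) * ∑ i ∈ s, w i * ‖x i‖ ^ 2 - ‖∑ i ∈ s, w i • x i‖ ^ 2) := by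
  have h_norm : ‖∑ i ∈ s, w i • x i‖ ^ 2 =
      ∑ i ∈ s, ∑ j ∈ s, w i * w j * inner ℝ (x i) (x j) := by
    simp_rw [← real_inner_self_eq_norm_sq, sum_inner, inner_sum, real_inner_smul_left,
      real_inner_smul_right, ← mul_assoc]
  have h_right : ∑ i ∈ s, ∑ j ∈ s, w i * w j * ‖x j‖ ^ 2 =
      (∑ i ∈ s, w i) * ∑ i ∈ s, w i * ‖x i‖ ^ 2 := by
    simp_rw [sum_mul_sum, mul_assoc]
  have h_left : ∑ i ∈ s, ∑ j ∈ s, w i * w j * ‖x i‖ ^ 2 =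
      (∑ i ∈ s, w i) * ∑ i ∈ s, w i * ‖x i‖ ^ 2 := by
    rw [sum_comm, ← h_right]
    simp_rw [mul_comm (w _) (w _)]
  simp only [h_norm, norm_sub_sq_real, mul_add, mul_sub, sum_add_distrib, sum_sub_distrib,
    h_left, h_right, mul_left_comm _ (2 : ℝ), ← mul_sum]
  ring

theorem Complex.weighted_lagrange_identity_three (u v w : ℝ) (p q r : ℂ) :
    (u + v + w) * (u * normSq p + v * normSq q + w * normSq r) -
        normSq (u * p + v * q + w * r) =
      u * v * normSq (p - q) + v * w * normSq (q - r) + w * u * normSq (r - p) := by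
  have h := Finset.univ.sum_sum_mul_norm_sub_sq ![u, v, w] ![p, q, r]
  simp only [Fin.sum_univ_three, Matrix.cons_val_zero, Matrix.cons_val_one, Matrix.cons_val_two,
    Matrix.head_cons, Matrix.tail_cons, real_smul, sub_self, norm_zero, norm_sub_rev q p, norm_sub_rev r q,
    norm_sub_rev p r] at h
  simp only [← normSq_eq_norm_sq] at h
  linear_combination -h / 2

/-- the dual mass norm minus the normal component equals twice the
kinetic energy: `|P|²_* − |⟨P,N⟩|²/|N|²ₘ = 2K(P)` with `N = (m₃,m₂,m₁)`,
`|N|²ₘ = m₁m₂m₃`. -/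
theorem stmt2 (m₁ m₂ m₃ : ℝ) (hm₁ : 0 < m₁) (hm₂ : 0 < m₂) (hm₃ : 0 < m₃)
    (P : ℂ × ℂ × ℂ) :
    (m₁ + m₂ + m₃) *
        (Complex.normSq P.1 / (m₁ * m₂) + Complex.normSq P.2.1 / (m₃ * m₁) +
          Complex.normSq P.2.2 / (m₂ * m₃)) -
      Complex.normSq ((m₃ : ℂ) * conj P.1 * 1 + (m₂ : ℂ) * conj P.2.1 * 1 +
          (m₁ : ℂ) * conj P.2.2 * 1) / (m₁ * m₂ * m₃)
      = 2 * KE m₁ m₂ m₃ P := by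
  obtain ⟨p, q, r⟩ := P
  have h_conj : (m₃ : ℂ) * conj p * 1 + (m₂ : ℂ) * conj q * 1 + (m₁ : ℂ) * conj r * 1 =
      conj (m₃ * p + m₂ * q + m₁ * r) := by
    simp
  rw [h_conj, normSq_conj, KE]
  have h_lagrange := weighted_lagrange_identity_three m₃ m₂ m₁ p q r
  field_simp
  linear_combination h_lagrange
end
end

section
/- For every Q ∈ W with Q ≠ 0 and every P ∈ ℂ³: |⟨P,Q⟩|²/|Q|² + |⟨P,T(Q)⟩|²/|T(Q)|² = 2K(P), where ⟨·,·⟩ is the Hermitian evaluation pairing, |Q| and |T(Q)| are mass norms, and T(Q) = (conj(Q₃₁)/m₂ − conj(Q₂₃)/m₁, conj(Q₂₃)/m₁ − conj(Q₁₂)/m₃, conj(Q₁₂)/m₃ − conj(Q₃₁)/m₂). (In particular T(Q) ≠ 0 for Q ∈ W∖{0}, so both denominators are nonzero.) -/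
/-!
For `Q ∈ W`, the vector `T(Q)` again lies in `W` and is orthogonal to `Q` for the mass metric,
so `Q, T(Q)` is an orthogonal basis of `W` when `Q ≠ 0`. Writing `⟨P, Q⟩ = ⟨M⁻¹P, Q⟩ₘ`, where `M` is
the diagonal matrix of the mass metric, the left-hand side is by Parseval the squared mass norm of
the orthogonal projection of `M⁻¹P` onto `W`, and that is `2K(P)`, whatever `Q` is. In coordinates
this amounts to two polynomial identities on `W`: `m₁m₂m₃ |T(Q)|² = m |Q|²` and
`m |⟨P,Q⟩|² + m₁m₂m₃ |⟨P,T(Q)⟩|² = 2K(P) · m |Q|²`.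
-/

noncomputable section
open Complex ComplexConjugate

def epair (P Q : ℂ × ℂ × ℂ) : ℂ :=
  conj P.1 * Q.1 + conj P.2.1 * Q.2.1 + conj P.2.2 * Q.2.2

def massSq (m₁ m₂ m₃ : ℝ) (Q : ℂ × ℂ × ℂ) : ℝ :=
  (m₁ * m₂ * Complex.normSq Q.1 + m₃ * m₁ * Complex.normSq Q.2.1 +
    m₂ * m₃ * Complex.normSq Q.2.2) / (m₁ + m₂ + m₃)

def Tvec (m₁ m₂ m₃ : ℝ) (Q : ℂ × ℂ × ℂ) : ℂ × ℂ × ℂ :=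
  (conj Q.2.1 / (m₂ : ℂ) - conj Q.2.2 / (m₁ : ℂ),
   conj Q.2.2 / (m₁ : ℂ) - conj Q.1 / (m₃ : ℂ),
   conj Q.1 / (m₃ : ℂ) - conj Q.2.1 / (m₂ : ℂ))

section MassMetric

variable {m₁ m₂ m₃ : ℝ}

theorem massSq_pos (h₁ : 0 < m₁) (h₂ : 0 < m₂) (h₃ : 0 < m₃) {Q : ℂ × ℂ × ℂ} (hQ : Q ≠ 0) :
    0 < massSq m₁ m₂ m₃ Q := by
  obtain ⟨a, b, c⟩ := Q
  have hQ' : a ≠ 0 ∨ b ≠ 0 ∨ c ≠ 0 := by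
    contrapose! hQ
    simp [hQ]
  refine div_pos ?_ (by positivity)
  have := Complex.normSq_nonneg a
  have := Complex.normSq_nonneg b
  have := Complex.normSq_nonneg c
  rcases hQ' with h | h | h <;> have := Complex.normSq_pos.2 h <;>
    nlinarith [mul_pos h₁ h₂, mul_pos h₃ h₁, mul_pos h₂ h₃]

theorem massSq_Tvec (h₁ : m₁ ≠ 0) (h₂ : m₂ ≠ 0) (h₃ : m₃ ≠ 0) {Q : ℂ × ℂ × ℂ}
    (hW : Q.1 + Q.2.1 + Q.2.2 = 0) :
    m₁ * m₂ * m₃ * massSq m₁ m₂ m₃ (Tvec m₁ m₂ m₃ Q) = (m₁ + m₂ + m₃) * massSq m₁ m₂ m₃ Q := by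
  obtain ⟨a, b, c⟩ := Q
  obtain rfl : c = -a - b := by linear_combination hW
  simp only [massSq, Tvec]
  rw [mul_div_assoc', mul_div_assoc']
  congr 1
  apply Complex.ofReal_injective
  push_cast
  simp only [← Complex.mul_conj]
  simp only [map_sub, map_neg, map_div₀, Complex.conj_conj, Complex.conj_ofReal]
  have : (m₁ : ℂ) ≠ 0 := by exact_mod_cast h₁
  have : (m₂ : ℂ) ≠ 0 := by exact_mod_cast h₂
  have : (m₃ : ℂ) ≠ 0 := by exact_mod_cast h₃
  field_simp
  ring

theorem Tvec_ne_zero (h₁ : 0 < m₁) (h₂ : 0 < m₂) (h₃ : 0 < m₃) {Q : ℂ × ℂ × ℂ}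
    (hW : Q.1 + Q.2.1 + Q.2.2 = 0) (hQ : Q ≠ 0) : Tvec m₁ m₂ m₃ Q ≠ 0 := by
  intro hT
  have hscale := massSq_Tvec h₁.ne' h₂.ne' h₃.ne' hW
  rw [hT] at hscale
  simp only [massSq, Prod.fst_zero, Prod.snd_zero, map_zero, mul_zero, add_zero, zero_div] at hscale
  exact (mul_pos (by positivity) (massSq_pos h₁ h₂ h₃ hQ)).ne hscale

theorem normSq_epair_add_normSq_epair_Tvec (h₁ : m₁ ≠ 0) (h₂ : m₂ ≠ 0) (h₃ : m₃ ≠ 0)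
    (hm : m₁ + m₂ + m₃ ≠ 0) (P : ℂ × ℂ × ℂ) {Q : ℂ × ℂ × ℂ} (hW : Q.1 + Q.2.1 + Q.2.2 = 0) :
    (m₁ + m₂ + m₃) * Complex.normSq (epair P Q) +
        m₁ * m₂ * m₃ * Complex.normSq (epair P (Tvec m₁ m₂ m₃ Q)) =
      2 * KE m₁ m₂ m₃ P * ((m₁ + m₂ + m₃) * massSq m₁ m₂ m₃ Q) := by
  obtain ⟨a, b, c⟩ := Q
  obtain rfl : c = -a - b := by linear_combination hW
  simp only [massSq, Tvec, epair, KE]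
  apply Complex.ofReal_injective
  push_cast
  simp only [← Complex.mul_conj]
  simp only [map_add, map_mul, map_sub, map_neg, map_div₀, Complex.conj_conj, Complex.conj_ofReal]
  have : (m₁ : ℂ) ≠ 0 := by exact_mod_cast h₁
  have : (m₂ : ℂ) ≠ 0 := by exact_mod_cast h₂
  have : (m₃ : ℂ) ≠ 0 := by exact_mod_cast h₃
  have : (m₁ + m₂ + m₃ : ℂ) ≠ 0 := by exact_mod_cast hm
  field_simp
  ring

end MassMetric

/-- for `Q ∈ W ∖ {0}` and any `P`,
`|⟨P,Q⟩|²/|Q|² + |⟨P,T(Q)⟩|²/|T(Q)|² = 2K(P)`, and `T(Q) ≠ 0`. -/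
theorem stmt3 (m₁ m₂ m₃ : ℝ) (hm₁ : 0 < m₁) (hm₂ : 0 < m₂) (hm₃ : 0 < m₃)
    (Q P : ℂ × ℂ × ℂ) (hW : Q.1 + Q.2.1 + Q.2.2 = 0) (hQ : Q ≠ 0) :
    Tvec m₁ m₂ m₃ Q ≠ 0 ∧
    Complex.normSq (epair P Q) / massSq m₁ m₂ m₃ Q +
      Complex.normSq (epair P (Tvec m₁ m₂ m₃ Q)) / massSq m₁ m₂ m₃ (Tvec m₁ m₂ m₃ Q)
      = 2 * KE m₁ m₂ m₃ P := by
  have hT := Tvec_ne_zero hm₁ hm₂ hm₃ hW hQ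
  refine ⟨hT, ?_⟩
  have hQpos := massSq_pos hm₁ hm₂ hm₃ hQ
  have hTpos := massSq_pos hm₁ hm₂ hm₃ hT
  have hscale := massSq_Tvec hm₁.ne' hm₂.ne' hm₃.ne' hW
  have hsum := normSq_epair_add_normSq_epair_Tvec hm₁.ne' hm₂.ne' hm₃.ne' (by positivity) P hW
  rw [div_add_div _ _ hQpos.ne' hTpos.ne', div_eq_iff (mul_pos hQpos hTpos).ne']
  apply mul_left_cancel₀ (show m₁ * m₂ * m₃ ≠ 0 by positivity)
  linear_combination (Complex.normSq (epair P Q) - 2 * KE m₁ m₂ m₃ P * massSq m₁ m₂ m₃ Q) * hscale +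
    massSq m₁ m₂ m₃ Q * hsum
end
end

section
/- Let X ∈ W with X ≠ 0, let Z ∈ ℂ³ satisfy ⟨Z,X⟩ = 0 (evaluation pairing), and let μ ∈ ℝ. Then, with Γ(X) = i·X*/|X|² where X* = (1/m)(m₁m₂X₁₂, m₃m₁X₃₁, m₂m₃X₂₃) and |X| the mass norm, the kinetic energy of the shifted momentum splits as K(Z + μ·Γ(X)) = K(Z) + μ²/(2|X|²). -/
noncomputable section
open Complex ComplexConjugate

/-- The dual covector `X*` of `X` for the mass metric. -/
def dualVec (m₁ m₂ m₃ : ℝ) (X : ℂ × ℂ × ℂ) : ℂ × ℂ × ℂ :=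
  (((m₁ * m₂ / (m₁ + m₂ + m₃) : ℝ) : ℂ) * X.1,
   ((m₃ * m₁ / (m₁ + m₂ + m₃) : ℝ) : ℂ) * X.2.1,
   ((m₂ * m₃ / (m₁ + m₂ + m₃) : ℝ) : ℂ) * X.2.2)

/-!
`K` is the Hermitian form of the sesquilinear form `KEform`, so
`K(Z + c Y) = K(Z) + 2 Re (c · KEform Z Y) + |c|² K(Y)`. For `X ∈ W`, collecting the coefficient
of each `conj Zᵢⱼ` and using `X₁₂ + X₃₁ + X₂₃ = 0` gives `2 · KEform Z X* = ⟨Z, X⟩`. Hence the cross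
term vanishes for `c = μ i / |X|²`, and with `Z = X*` we get `2 K(X*) = ⟨X*, X⟩ = |X|²`, which
produces the term `μ² / (2 |X|²)`.
-/

def KEform (m₁ m₂ m₃ : ℝ) (P Q : ℂ × ℂ × ℂ) : ℂ :=
  conj (P.1 - P.2.1) * (Q.1 - Q.2.1) / (2 * m₁) + conj (P.2.2 - P.1) * (Q.2.2 - Q.1) / (2 * m₂) +
    conj (P.2.1 - P.2.2) * (Q.2.1 - Q.2.2) / (2 * m₃)

theorem KE_add_smul (m₁ m₂ m₃ : ℝ) (Z Y : ℂ × ℂ × ℂ) (c : ℂ) :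
    KE m₁ m₂ m₃ (Z + c • Y) =
      KE m₁ m₂ m₃ Z + 2 * (c * KEform m₁ m₂ m₃ Z Y).re + normSq c * KE m₁ m₂ m₃ Y := by
  apply Complex.ofReal_injective
  push_cast
  simp only [re_eq_add_conj, KE, KEform, ofReal_add, ofReal_div, ofReal_mul, ofReal_ofNat,
    normSq_eq_conj_mul_self, Prod.fst_add, Prod.snd_add, Prod.smul_fst, Prod.smul_snd, smul_eq_mul,
    map_add, map_sub, map_mul, map_div₀, conj_conj, conj_ofReal, map_ofNat]
  ring

theorem epair_dualVec_self (m₁ m₂ m₃ : ℝ) (X : ℂ × ℂ × ℂ) :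
    epair (dualVec m₁ m₂ m₃ X) X = massSq m₁ m₂ m₃ X := by
  simp only [epair, dualVec, massSq, ofReal_div, ofReal_add, ofReal_mul, map_mul, map_div₀,
    map_add, conj_ofReal, normSq_eq_conj_mul_self]
  ring

theorem two_mul_KEform_dualVec {m₁ m₂ m₃ : ℝ} (hm₁ : m₁ ≠ 0) (hm₂ : m₂ ≠ 0) (hm₃ : m₃ ≠ 0)
    (hm : m₁ + m₂ + m₃ ≠ 0) (Z : ℂ × ℂ × ℂ) {X : ℂ × ℂ × ℂ} (hX : X.1 + X.2.1 + X.2.2 = 0) :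
    2 * KEform m₁ m₂ m₃ Z (dualVec m₁ m₂ m₃ X) = epair Z X := by
  have : (m₁ : ℂ) ≠ 0 := mod_cast hm₁
  have : (m₂ : ℂ) ≠ 0 := mod_cast hm₂
  have : (m₃ : ℂ) ≠ 0 := mod_cast hm₃
  have : (m₁ : ℂ) + m₂ + m₃ ≠ 0 := mod_cast hm
  simp only [KEform, dualVec, epair, ofReal_div, ofReal_mul, ofReal_add, map_sub]
  linear_combination (norm := skip)
    (-(m₃ * conj Z.1 + m₂ * conj Z.2.1 + m₁ * conj Z.2.2) / (m₁ + m₂ + m₃)) * hX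
  field_simp
  ring

theorem two_mul_KE_dualVec {m₁ m₂ m₃ : ℝ} (hm₁ : m₁ ≠ 0) (hm₂ : m₂ ≠ 0) (hm₃ : m₃ ≠ 0)
    (hm : m₁ + m₂ + m₃ ≠ 0) {X : ℂ × ℂ × ℂ} (hX : X.1 + X.2.1 + X.2.2 = 0) :
    2 * KE m₁ m₂ m₃ (dualVec m₁ m₂ m₃ X) = massSq m₁ m₂ m₃ X := by
  apply Complex.ofReal_injective
  rw [← epair_dualVec_self, ← two_mul_KEform_dualVec hm₁ hm₂ hm₃ hm _ hX]
  simp only [KE, KEform, ofReal_mul, ofReal_add, ofReal_div, ofReal_ofNat, normSq_eq_conj_mul_self]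

theorem stmt6_general (m₁ m₂ m₃ : ℝ) (hm₁ : 0 < m₁) (hm₂ : 0 < m₂) (hm₃ : 0 < m₃)
    (X Z : ℂ × ℂ × ℂ) (μ : ℝ)
    (hW : X.1 + X.2.1 + X.2.2 = 0)
    (hZ : epair Z X = 0) :
    let Γ : ℂ × ℂ × ℂ := (Complex.I / ((massSq m₁ m₂ m₃ X : ℝ) : ℂ)) • dualVec m₁ m₂ m₃ X
    KE m₁ m₂ m₃ (Z + (μ : ℂ) • Γ) = KE m₁ m₂ m₃ Z + μ ^ 2 / (2 * massSq m₁ m₂ m₃ X) := by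
  intro Γ
  have hm : m₁ + m₂ + m₃ ≠ 0 := by positivity
  have hcross : KEform m₁ m₂ m₃ Z (dualVec m₁ m₂ m₃ X) = 0 := by
    linear_combination (two_mul_KEform_dualVec hm₁.ne' hm₂.ne' hm₃.ne' hm Z hW).trans hZ / 2
  have hquad : KE m₁ m₂ m₃ (dualVec m₁ m₂ m₃ X) = massSq m₁ m₂ m₃ X / 2 := by
    linear_combination two_mul_KE_dualVec hm₁.ne' hm₂.ne' hm₃.ne' hm hW / 2
  rw [smul_smul, KE_add_smul, hcross, mul_zero, zero_re, mul_zero, add_zero, hquad]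
  simp only [normSq_mul, normSq_ofReal, normSq_div, normSq_I]
  rcases eq_or_ne (massSq m₁ m₂ m₃ X) 0 with hS | hS
  · -- `I / 0 = 0` and `μ ^ 2 / 0 = 0`
    simp [hS]
  · field_simp

/-- the momentum-shift splitting of kinetic energy,
`K(Z + μ Γ(X)) = K(Z) + μ²/(2|X|²)` with `Γ(X) = i X*/|X|²`. -/
theorem stmt6 (m₁ m₂ m₃ : ℝ) (hm₁ : 0 < m₁) (hm₂ : 0 < m₂) (hm₃ : 0 < m₃)
    (X Z : ℂ × ℂ × ℂ) (μ : ℝ)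
    (hW : X.1 + X.2.1 + X.2.2 = 0) (hX : X ≠ 0)
    (hZ : epair Z X = 0) :
    let Γ : ℂ × ℂ × ℂ := (Complex.I / ((massSq m₁ m₂ m₃ X : ℝ) : ℂ)) • dualVec m₁ m₂ m₃ X
    KE m₁ m₂ m₃ (Z + (μ : ℂ) • Γ) = KE m₁ m₂ m₃ Z + μ ^ 2 / (2 * massSq m₁ m₂ m₃ X) :=
  stmt6_general m₁ m₂ m₃ hm₁ hm₂ hm₃ X Z μ hW hZ
end
end

section
/- Let X ∈ W with X ≠ 0 and let Z ∈ ℂ³ satisfy ⟨Z,X⟩ = 0 (evaluation pairing). Then the Fubini–Study conorm of Z equals twice the shape kinetic energy scaled by |X|²: |⟨Z, e(X)⟩|² = 2·|X|²·K(Z), where e(X) = sqrt(m₁m₂m₃/m)·(conj(X₃₁)/m₂ − conj(X₂₃)/m₁, conj(X₂₃)/m₁ − conj(X₁₂)/m₃, conj(X₁₂)/m₃ − conj(X₃₁)/m₂) and |X| is the mass norm. -/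
noncomputable section
open Complex ComplexConjugate

/-- The Fubini–Study unit tangent vector field `e(X)`. -/
def eX (m₁ m₂ m₃ : ℝ) (X : ℂ × ℂ × ℂ) : ℂ × ℂ × ℂ :=
  ((Real.sqrt (m₁ * m₂ * m₃ / (m₁ + m₂ + m₃)) : ℝ) : ℂ) •
    (conj X.2.1 / (m₂ : ℂ) - conj X.2.2 / (m₁ : ℂ),
     conj X.2.2 / (m₁ : ℂ) - conj X.1 / (m₃ : ℂ),
     conj X.1 / (m₃ : ℂ) - conj X.2.1 / (m₂ : ℂ))

/-!
Up to the factor `-√(m₁m₂m₃/m) / (m₁m₂m₃)` and a conjugation, `⟨Z, e(X)⟩` is the bilinear sum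
`∑ wᵢ Xᵢ pᵢ` of the edge coordinates of `X` against the momenta of the opposite bodies, with the
weights `w = (m₁m₂, m₃m₁, m₂m₃)` of the mass metric. For `X ∈ W`, the condition `⟨Z,X⟩ = 0` says
exactly that `X` and `conj p` are parallel (all minors `Xᵢ conj pⱼ - Xⱼ conj pᵢ` vanish), which is
the equality case of Cauchy–Schwarz: `|∑ wᵢ Xᵢ pᵢ|² = (∑ wᵢ |Xᵢ|²)(∑ wᵢ |pᵢ|²)`. The two factors
are `m |X|²` and `2 m₁m₂m₃ K(Z)`.
-/

theorem Complex.normSq_sum_mul_eq_of_mul_conj_symm {ι : Type*} (s : Finset ι) (w : ι → ℝ)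
    (x y : ι → ℂ) (h : ∀ i ∈ s, ∀ j ∈ s, x i * conj (y j) = x j * conj (y i)) :
    normSq (∑ i ∈ s, w i * (x i * y i)) =
      (∑ i ∈ s, w i * normSq (x i)) * ∑ i ∈ s, w i * normSq (y i) := by
  apply ofReal_injective
  push_cast
  simp only [← mul_conj, map_sum, map_mul, conj_ofReal, Finset.sum_mul_sum]
  rw [Finset.sum_comm]
  refine Finset.sum_congr rfl fun j hj => Finset.sum_congr rfl fun i hi => ?_
  linear_combination (w i * w j * y i * conj (x j)) * h i hi j hj

section ThreeBody

variable (m₁ m₂ m₃ : ℝ)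

def massWeights : Fin 3 → ℝ := ![m₁ * m₂, m₃ * m₁, m₂ * m₃]

def edgeCoords (X : ℂ × ℂ × ℂ) : Fin 3 → ℂ := ![X.1, X.2.1, X.2.2]

/-- The body momenta `p₃, p₂, p₁` of `P` (`p₁ = P₁₂ - P₃₁` etc.): the `i`-th belongs to the body
opposite to the `i`-th edge of `edgeCoords`. -/
def oppositeMomenta (P : ℂ × ℂ × ℂ) : Fin 3 → ℂ := ![P.2.1 - P.2.2, P.2.2 - P.1, P.1 - P.2.1]

theorem massSq_eq_sum (X : ℂ × ℂ × ℂ) :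
    massSq m₁ m₂ m₃ X =
      (∑ i, massWeights m₁ m₂ m₃ i * normSq (edgeCoords X i)) / (m₁ + m₂ + m₃) := by
  simp [massSq, massWeights, edgeCoords, Fin.sum_univ_three]

variable {m₁ m₂ m₃}

theorem KE_eq_sum (hm₁ : m₁ ≠ 0) (hm₂ : m₂ ≠ 0) (hm₃ : m₃ ≠ 0) (P : ℂ × ℂ × ℂ) :
    KE m₁ m₂ m₃ P =
      (∑ i, massWeights m₁ m₂ m₃ i * normSq (oppositeMomenta P i)) / (2 * (m₁ * m₂ * m₃)) := by
  simp only [KE, massWeights, oppositeMomenta, Fin.sum_univ_three]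
  field_simp
  simp only [Fin.isValue, Matrix.cons_val_zero, Matrix.cons_val_one, Matrix.cons_val]
  ring

theorem epair_eX_eq (hm₁ : m₁ ≠ 0) (hm₂ : m₂ ≠ 0) (hm₃ : m₃ ≠ 0) (X Z : ℂ × ℂ × ℂ) :
    epair Z (eX m₁ m₂ m₃ X) =
      -((√(m₁ * m₂ * m₃ / (m₁ + m₂ + m₃)) / (m₁ * m₂ * m₃) : ℝ) : ℂ) *
        conj (∑ i, massWeights m₁ m₂ m₃ i * (edgeCoords X i * oppositeMomenta Z i)) := by
  have : (m₁ : ℂ) ≠ 0 := ofReal_ne_zero.mpr hm₁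
  have : (m₂ : ℂ) ≠ 0 := ofReal_ne_zero.mpr hm₂
  have : (m₃ : ℂ) ≠ 0 := ofReal_ne_zero.mpr hm₃
  simp only [epair, eX, Prod.smul_mk, smul_eq_mul, ofReal_div, ofReal_mul, massWeights, edgeCoords,
    oppositeMomenta, Fin.sum_univ_three, Fin.isValue, Matrix.cons_val_zero, Matrix.cons_val_one,
    Matrix.cons_val, map_add, map_mul, conj_ofReal, map_sub, neg_mul]
  field_simp
  ring

theorem edgeCoords_mul_conj_oppositeMomenta_symm {X Z : ℂ × ℂ × ℂ}
    (hW : X.1 + X.2.1 + X.2.2 = 0) (hZ : epair Z X = 0) (i j : Fin 3) :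
    edgeCoords X i * conj (oppositeMomenta Z j) = edgeCoords X j * conj (oppositeMomenta Z i) := by
  obtain ⟨a, b, c⟩ := X
  -- once `X₂₃` is eliminated, every minor is `±⟨Z,X⟩`
  obtain rfl : c = -a - b := by linear_combination hW
  simp only [epair] at hZ
  fin_cases i <;> fin_cases j <;>
    simp only [edgeCoords, oppositeMomenta, Fin.zero_eta, Fin.mk_one, Fin.reduceFinMk, Fin.isValue,
      Matrix.cons_val_zero, Matrix.cons_val_one, Matrix.cons_val, map_sub] <;>
    first | linear_combination hZ | linear_combination -hZ

end ThreeBody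

theorem stmt8_general (m₁ m₂ m₃ : ℝ) (hm₁ : 0 < m₁) (hm₂ : 0 < m₂) (hm₃ : 0 < m₃)
    (X Z : ℂ × ℂ × ℂ)
    (hW : X.1 + X.2.1 + X.2.2 = 0)
    (hZ : epair Z X = 0) :
    Complex.normSq (epair Z (eX m₁ m₂ m₃ X)) = 2 * massSq m₁ m₂ m₃ X * KE m₁ m₂ m₃ Z := by
  rw [epair_eX_eq hm₁.ne' hm₂.ne' hm₃.ne', normSq_mul, normSq_neg, normSq_conj, normSq_ofReal,
    normSq_sum_mul_eq_of_mul_conj_symm _ _ _ _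
      fun i _ j _ => edgeCoords_mul_conj_oppositeMomenta_symm hW hZ i j,
    massSq_eq_sum, KE_eq_sum hm₁.ne' hm₂.ne' hm₃.ne']
  field_simp
  rw [Real.sq_sqrt (by positivity)]
  field_simp

/-- the Fubini–Study conorm of `Z` equals twice the shape kinetic energy
scaled by `|X|²`: `|⟨Z,e(X)⟩|² = 2|X|²K(Z)`. -/
theorem stmt8 (m₁ m₂ m₃ : ℝ) (hm₁ : 0 < m₁) (hm₂ : 0 < m₂) (hm₃ : 0 < m₃)
    (X Z : ℂ × ℂ × ℂ)
    (hW : X.1 + X.2.1 + X.2.2 = 0) (hX : X ≠ 0)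
    (hZ : epair Z X = 0) :
    Complex.normSq (epair Z (eX m₁ m₂ m₃ X)) = 2 * massSq m₁ m₂ m₃ X * KE m₁ m₂ m₃ Z :=
  stmt8_general m₁ m₂ m₃ hm₁ hm₂ hm₃ X Z hW hZ
end
end

section
/- Let X ∈ W and V ∈ W. Then ⟨e(X), V⟩ₘ = sqrt(m₁m₂m₃/m)·(X₃₁V₁₂ − X₁₂V₃₁), where e(X) = sqrt(m₁m₂m₃/m)·(conj(X₃₁)/m₂ − conj(X₂₃)/m₁, conj(X₂₃)/m₁ − conj(X₁₂)/m₃, conj(X₁₂)/m₃ − conj(X₃₁)/m₂); moreover the three expressions X₃₁V₁₂ − X₁₂V₃₁, X₁₂V₂₃ − X₂₃V₁₂ and X₂₃V₃₁ − X₃₁V₂₃ are all equal. In particular the one-form σ = ⟨e(X), dX⟩ (up to the constant factor sqrt(m₁m₂m₃/m)) is independent of the masses. -/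
noncomputable section
open Complex ComplexConjugate

/-- Hermitian mass metric `⟨V,W⟩ₘ`. -/
def massInner (m₁ m₂ m₃ : ℝ) (V W : ℂ × ℂ × ℂ) : ℂ :=
  ((m₁ * m₂ : ℝ) : ℂ) * conj V.1 * W.1 / ((m₁ + m₂ + m₃ : ℝ) : ℂ) +
    ((m₃ * m₁ : ℝ) : ℂ) * conj V.2.1 * W.2.1 / ((m₁ + m₂ + m₃ : ℝ) : ℂ) +
    ((m₂ * m₃ : ℝ) : ℂ) * conj V.2.2 * W.2.2 / ((m₁ + m₂ + m₃ : ℝ) : ℂ)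

/- On the plane `W` the three `2 × 2` minors of `X` and `V` coincide. Expanding `⟨e(X), V⟩ₘ`, the
mass factors cancel except for one, leaving `sqrt(m₁m₂m₃/m) / m` times the sum of the minors weighted
by `m₁, m₂, m₃`; as the minors agree, this weighted sum is `m` times their common value. -/

theorem minors_eq_of_sum_eq_zero {R : Type*} [CommRing R] (X V : R × R × R)
    (hX : X.1 + X.2.1 + X.2.2 = 0) (hV : V.1 + V.2.1 + V.2.2 = 0) :
    X.2.1 * V.1 - X.1 * V.2.1 = X.1 * V.2.2 - X.2.2 * V.1 ∧
      X.1 * V.2.2 - X.2.2 * V.1 = X.2.2 * V.2.1 - X.2.1 * V.2.2 :=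
  ⟨by linear_combination V.1 * hX - X.1 * hV, by linear_combination V.2.2 * hX - X.2.2 * hV⟩

theorem massInner_smul_left (m₁ m₂ m₃ : ℝ) (c : ℂ) (U V : ℂ × ℂ × ℂ) :
    massInner m₁ m₂ m₃ (c • U) V = conj c * massInner m₁ m₂ m₃ U V := by
  simp only [massInner, Prod.smul_fst, Prod.smul_snd, smul_eq_mul, map_mul]
  ring

theorem massInner_conj_div_masses {m₁ m₂ m₃ : ℝ} (hm₁ : m₁ ≠ 0) (hm₂ : m₂ ≠ 0) (hm₃ : m₃ ≠ 0)
    (X V : ℂ × ℂ × ℂ) :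
    massInner m₁ m₂ m₃
        (conj X.2.1 / (m₂ : ℂ) - conj X.2.2 / (m₁ : ℂ),
         conj X.2.2 / (m₁ : ℂ) - conj X.1 / (m₃ : ℂ),
         conj X.1 / (m₃ : ℂ) - conj X.2.1 / (m₂ : ℂ)) V =
      (m₁ * (X.2.1 * V.1 - X.1 * V.2.1) + m₂ * (X.1 * V.2.2 - X.2.2 * V.1) +
          m₃ * (X.2.2 * V.2.1 - X.2.1 * V.2.2)) / ((m₁ + m₂ + m₃ : ℝ) : ℂ) := by
  have hm₁' : (m₁ : ℂ) ≠ 0 := ofReal_ne_zero.mpr hm₁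
  have hm₂' : (m₂ : ℂ) ≠ 0 := ofReal_ne_zero.mpr hm₂
  have hm₃' : (m₃ : ℂ) ≠ 0 := ofReal_ne_zero.mpr hm₃
  simp only [massInner, map_sub, map_div₀, conj_conj, conj_ofReal]
  field_simp
  push_cast
  ring

/-- `⟨e(X),V⟩ₘ = sqrt(m₁m₂m₃/m)(X₃₁V₁₂ − X₁₂V₃₁)` for `X, V ∈ W`, and the
three expressions `X₃₁V₁₂ − X₁₂V₃₁`, `X₁₂V₂₃ − X₂₃V₁₂`, `X₂₃V₃₁ − X₃₁V₂₃` all agree,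
so the one-form `σ` is independent of the masses. -/
theorem stmt10 (m₁ m₂ m₃ : ℝ) (hm₁ : 0 < m₁) (hm₂ : 0 < m₂) (hm₃ : 0 < m₃)
    (X V : ℂ × ℂ × ℂ)
    (hXW : X.1 + X.2.1 + X.2.2 = 0) (hVW : V.1 + V.2.1 + V.2.2 = 0) :
    massInner m₁ m₂ m₃ (eX m₁ m₂ m₃ X) V =
      ((Real.sqrt (m₁ * m₂ * m₃ / (m₁ + m₂ + m₃)) : ℝ) : ℂ) * (X.2.1 * V.1 - X.1 * V.2.1) ∧
    X.2.1 * V.1 - X.1 * V.2.1 = X.1 * V.2.2 - X.2.2 * V.1 ∧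
    X.1 * V.2.2 - X.2.2 * V.1 = X.2.2 * V.2.1 - X.2.1 * V.2.2 := by
  obtain ⟨h₁, h₂⟩ := minors_eq_of_sum_eq_zero X V hXW hVW
  refine ⟨?_, h₁, h₂⟩
  have hm : ((m₁ + m₂ + m₃ : ℝ) : ℂ) ≠ 0 := ofReal_ne_zero.mpr (by positivity)
  rw [eX, massInner_smul_left, conj_ofReal,
    massInner_conj_div_masses hm₁.ne' hm₂.ne' hm₃.ne', ← h₂, ← h₁, ← add_mul, ← add_mul,
    ← ofReal_add, ← ofReal_add, mul_div_cancel_left₀ _ hm]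
end
end

section
/- Let z ∈ C with z ≠ 0, write z = a + i·b with a, b ∈ ℝ³ the componentwise real and imaginary parts, and set c = a × b with components c = (c₁, c₂, c₃) indexed by the pairs (12), (31), (23). Then: (i) |c| = |a|² > 0; (ii) the squared mutual distances satisfy |z₁₂|² = (c₂² + c₃²)/|c|, |z₃₁|² = (c₁² + c₃²)/|c|, |z₂₃|² = (c₁² + c₂²)/|c|; (iii) conj(z₁₂)·z₃₁ = −c₁c₂/|c| + i·c₃, conj(z₂₃)·z₁₂ = −c₃c₁/|c| + i·c₂, conj(z₃₁)·z₂₃ = −c₂c₃/|c| + i·c₁; and (iv) z × conj(z) = −2i·c, where × denotes the complex-bilinear extension of the cross product to ℂ³. -/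
/-!
Write `z = a + i b`. The cone equation says exactly that `|a| = |b|` and `a ⊥ b`, so by
Lagrange's identity `|a × b| = |a|²`, and `a / |a|, b / |a|, (a × b) / |a|²` is an orthonormal
basis. Then the rows of the matrix with these columns are orthonormal as well, which after
multiplying by `|a|²` reads `aᵢ aⱼ + bᵢ bⱼ = δᵢⱼ |a|² - cᵢ cⱼ / |a|²`. The left side is the real
part of `conj zᵢ * zⱼ`, whose imaginary part `aᵢ bⱼ - aⱼ bᵢ` is a component of `c`. Part (iv)
is an identity valid on all of `ℂ³`.
-/

noncomputable section
open Complex ComplexConjugate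

/-- Euclidean dot product on ℝ³ (as a triple). -/
def dot3 (a b : ℝ × ℝ × ℝ) : ℝ :=
  a.1 * b.1 + a.2.1 * b.2.1 + a.2.2 * b.2.2

/-- Cross product on ℝ³ (as a triple). -/
def cross3 (a b : ℝ × ℝ × ℝ) : ℝ × ℝ × ℝ :=
  (a.2.1 * b.2.2 - a.2.2 * b.2.1, a.2.2 * b.1 - a.1 * b.2.2, a.1 * b.2.1 - a.2.1 * b.1)

/-- Complex-bilinear extension of the cross product to ℂ³ (as a triple). -/
def ccross (a b : ℂ × ℂ × ℂ) : ℂ × ℂ × ℂ :=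
  (a.2.1 * b.2.2 - a.2.2 * b.2.1, a.2.2 * b.1 - a.1 * b.2.2, a.1 * b.2.1 - a.2.1 * b.1)


theorem dot3_self_nonneg (a : ℝ × ℝ × ℝ) : 0 ≤ dot3 a a :=
  add_nonneg (add_nonneg (mul_self_nonneg _) (mul_self_nonneg _)) (mul_self_nonneg _)

theorem dot3_self_eq_zero {a : ℝ × ℝ × ℝ} : dot3 a a = 0 ↔ a = 0 := by
  obtain ⟨a₁, a₂, a₃⟩ := a
  simp only [dot3, Prod.mk_eq_zero]
  constructor
  · intro h
    refine ⟨?_, ?_, ?_⟩ <;> nlinarith [mul_self_nonneg a₁, mul_self_nonneg a₂, mul_self_nonneg a₃]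
  · rintro ⟨rfl, rfl, rfl⟩
    ring

theorem dot3_cross3_self (a b : ℝ × ℝ × ℝ) :
    dot3 (cross3 a b) (cross3 a b) = dot3 a a * dot3 b b - dot3 a b ^ 2 := by
  simp only [dot3, cross3]; ring

section OrthogonalEqualLength

variable {a b : ℝ × ℝ × ℝ} (hlen : dot3 b b = dot3 a a) (horth : dot3 a b = 0)
include hlen horth

theorem sqrt_dot3_cross3_self_of_orthogonal :
    Real.sqrt (dot3 (cross3 a b) (cross3 a b)) = dot3 a a := by
  rw [dot3_cross3_self, hlen, horth, ← sq, zero_pow two_ne_zero, sub_zero,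
    Real.sqrt_sq (dot3_self_nonneg a)]

theorem mul_self_add_mul_self_eq_cross3_of_orthogonal (ha : dot3 a a ≠ 0) :
    a.1 * a.1 + b.1 * b.1 = ((cross3 a b).2.1 ^ 2 + (cross3 a b).2.2 ^ 2) / dot3 a a ∧
    a.2.1 * a.2.1 + b.2.1 * b.2.1 = ((cross3 a b).1 ^ 2 + (cross3 a b).2.2 ^ 2) / dot3 a a ∧
    a.2.2 * a.2.2 + b.2.2 * b.2.2 = ((cross3 a b).1 ^ 2 + (cross3 a b).2.1 ^ 2) / dot3 a a := by
  obtain ⟨a₁, a₂, a₃⟩ := a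
  obtain ⟨b₁, b₂, b₃⟩ := b
  simp only [dot3, cross3] at *
  refine ⟨?_, ?_, ?_⟩ <;> rw [eq_div_iff ha]
  · linear_combination (-a₁ ^ 2) * hlen + (2 * a₁ * b₁) * horth
  · linear_combination (-a₂ ^ 2) * hlen + (2 * a₂ * b₂) * horth
  · linear_combination (-a₃ ^ 2) * hlen + (2 * a₃ * b₃) * horth

theorem mul_add_mul_eq_cross3_of_orthogonal (ha : dot3 a a ≠ 0) :
    a.1 * a.2.1 + b.1 * b.2.1 = -((cross3 a b).1 * (cross3 a b).2.1) / dot3 a a ∧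
    a.2.2 * a.1 + b.2.2 * b.1 = -((cross3 a b).2.2 * (cross3 a b).1) / dot3 a a ∧
    a.2.1 * a.2.2 + b.2.1 * b.2.2 = -((cross3 a b).2.1 * (cross3 a b).2.2) / dot3 a a := by
  obtain ⟨a₁, a₂, a₃⟩ := a
  obtain ⟨b₁, b₂, b₃⟩ := b
  simp only [dot3, cross3] at *
  refine ⟨?_, ?_, ?_⟩ <;> rw [eq_div_iff ha]
  · linear_combination (-(a₁ * a₂)) * hlen + (a₁ * b₂ + a₂ * b₁) * horth
  · linear_combination (-(a₃ * a₁)) * hlen + (a₃ * b₁ + a₁ * b₃) * horth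
  · linear_combination (-(a₂ * a₃)) * hlen + (a₂ * b₃ + a₃ * b₂) * horth

end OrthogonalEqualLength

def re3 (z : ℂ × ℂ × ℂ) : ℝ × ℝ × ℝ := (z.1.re, z.2.1.re, z.2.2.re)

def im3 (z : ℂ × ℂ × ℂ) : ℝ × ℝ × ℝ := (z.1.im, z.2.1.im, z.2.2.im)

theorem sq_add_sq_add_sq_eq_zero_iff (z : ℂ × ℂ × ℂ) :
    z.1 ^ 2 + z.2.1 ^ 2 + z.2.2 ^ 2 = 0 ↔
      dot3 (im3 z) (im3 z) = dot3 (re3 z) (re3 z) ∧ dot3 (re3 z) (im3 z) = 0 := by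
  simp only [Complex.ext_iff, dot3, re3, im3, add_re, add_im, sq, mul_re, mul_im, zero_re,
    zero_im]
  constructor <;> rintro ⟨h₁, h₂⟩ <;> exact ⟨by linarith, by linarith⟩

theorem eq_zero_of_re3_eq_zero_of_im3_eq_zero {z : ℂ × ℂ × ℂ} (hre : re3 z = 0)
    (him : im3 z = 0) : z = 0 := by
  simp only [re3, im3, Prod.mk_eq_zero] at hre him
  simp only [Prod.ext_iff, Complex.ext_iff, Prod.fst_zero, Prod.snd_zero, zero_re, zero_im]
  exact ⟨⟨hre.1, him.1⟩, ⟨hre.2.1, him.2.1⟩, ⟨hre.2.2, him.2.2⟩⟩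

theorem dot3_re3_self_pos {z : ℂ × ℂ × ℂ} (hz : z ≠ 0)
    (hlen : dot3 (im3 z) (im3 z) = dot3 (re3 z) (re3 z)) : 0 < dot3 (re3 z) (re3 z) := by
  refine (dot3_self_nonneg _).lt_of_ne fun h => hz ?_
  exact eq_zero_of_re3_eq_zero_of_im3_eq_zero (dot3_self_eq_zero.mp h.symm)
    (dot3_self_eq_zero.mp (hlen.trans h.symm))

theorem conj_mul_eq (w z : ℂ) :
    conj w * z =
      ((w.re * z.re + w.im * z.im : ℝ) : ℂ) + I * ((w.re * z.im - z.re * w.im : ℝ) : ℂ) := by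
  apply Complex.ext <;>
    simp only [mul_re, mul_im, conj_re, conj_im, add_re, add_im, ofReal_re, ofReal_im, I_re,
      I_im] <;>
    ring

theorem ccross_conj (z : ℂ × ℂ × ℂ) :
    ccross z (conj z.1, conj z.2.1, conj z.2.2) =
      (-2 * I * ((cross3 (re3 z) (im3 z)).1 : ℂ), -2 * I * ((cross3 (re3 z) (im3 z)).2.1 : ℂ),
        -2 * I * ((cross3 (re3 z) (im3 z)).2.2 : ℂ)) := by
  simp only [ccross, cross3, re3, im3, Prod.mk.injEq, Complex.ext_iff, sub_re, sub_im, mul_re,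
    mul_im, conj_re, conj_im, neg_re, neg_im, re_ofNat, im_ofNat, I_re, I_im, ofReal_re, ofReal_im]
  refine ⟨⟨?_, ?_⟩, ⟨?_, ?_⟩, ⟨?_, ?_⟩⟩ <;> ring

/-- for `z ∈ C ∖ {0}`, with `a = Re z`, `b = Im z`, `c = a × b`:
(i) `|c| = |a|² > 0`; (ii) the formulas for the squared mutual distances `|z_{ij}|²`
in terms of `c`; (iii) the formulas for `conj(z_{ij})z_{kl}`; (iv) `z × conj z = −2ic`. -/
theorem stmt14 (z : ℂ × ℂ × ℂ) (hz : z ≠ 0)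
    (hC : z.1 ^ 2 + z.2.1 ^ 2 + z.2.2 ^ 2 = 0) :
    let a : ℝ × ℝ × ℝ := (z.1.re, z.2.1.re, z.2.2.re)
    let b : ℝ × ℝ × ℝ := (z.1.im, z.2.1.im, z.2.2.im)
    let c : ℝ × ℝ × ℝ := cross3 a b
    let nc : ℝ := Real.sqrt (dot3 c c)
    -- (i)
    (nc = dot3 a a ∧ 0 < dot3 a a) ∧
    -- (ii)
    (Complex.normSq z.1 = (c.2.1 ^ 2 + c.2.2 ^ 2) / nc ∧
     Complex.normSq z.2.1 = (c.1 ^ 2 + c.2.2 ^ 2) / nc ∧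
     Complex.normSq z.2.2 = (c.1 ^ 2 + c.2.1 ^ 2) / nc) ∧
    -- (iii)
    (conj z.1 * z.2.1 = ((-(c.1 * c.2.1) / nc : ℝ) : ℂ) + Complex.I * (c.2.2 : ℂ) ∧
     conj z.2.2 * z.1 = ((-(c.2.2 * c.1) / nc : ℝ) : ℂ) + Complex.I * (c.2.1 : ℂ) ∧
     conj z.2.1 * z.2.2 = ((-(c.2.1 * c.2.2) / nc : ℝ) : ℂ) + Complex.I * (c.1 : ℂ)) ∧
    -- (iv)
    ccross z (conj z.1, conj z.2.1, conj z.2.2) =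
      (-2 * Complex.I * (c.1 : ℂ), -2 * Complex.I * (c.2.1 : ℂ),
        -2 * Complex.I * (c.2.2 : ℂ)) := by
  intro a b c nc
  obtain ⟨hlen, horth⟩ : dot3 b b = dot3 a a ∧ dot3 a b = 0 :=
    (sq_add_sq_add_sq_eq_zero_iff z).mp hC
  have hpos : 0 < dot3 a a := dot3_re3_self_pos hz hlen
  have hnc : nc = dot3 a a := sqrt_dot3_cross3_self_of_orthogonal hlen horth
  obtain ⟨hn₁, hn₂, hn₃⟩ := mul_self_add_mul_self_eq_cross3_of_orthogonal hlen horth hpos.ne'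
  obtain ⟨hm₁, hm₂, hm₃⟩ := mul_add_mul_eq_cross3_of_orthogonal hlen horth hpos.ne'
  refine ⟨⟨hnc, hpos⟩, ?_, ?_, ccross_conj z⟩
  · simp only [normSq_apply, hnc]
    exact ⟨hn₁, hn₂, hn₃⟩
  · rw [hnc, ← hm₁, ← hm₂, ← hm₃]
    exact ⟨conj_mul_eq _ _, conj_mul_eq _ _, conj_mul_eq _ _⟩
end
end

section
/- Let z ∈ ℂ³ with z₁₂, z₃₁, z₂₃ all nonzero, let η ∈ ℂ³, and define the Levi-Civita transformed momentum Y = (η₁₂/(2·conj(z₁₂)), η₃₁/(2·conj(z₃₁)), η₂₃/(2·conj(z₂₃))). Set ρ₁₂ = |z₁₂|², ρ₃₁ = |z₃₁|², ρ₂₃ = |z₂₃|², and π₁ = η₁₂·conj(z₃₁) − η₃₁·conj(z₁₂), π₂ = η₂₃·conj(z₁₂) − η₁₂·conj(z₂₃), π₃ = η₃₁·conj(z₂₃) − η₂₃·conj(z₃₁). Then the kinetic energy transforms as K(Y) = |π₁|²/(8m₁ρ₁₂ρ₃₁) + |π₂|²/(8m₂ρ₁₂ρ₂₃) + |π₃|²/(8m₃ρ₃₁ρ₂₃).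 -/
noncomputable section
open Complex ComplexConjugate

theorem normSq_div_two_conj_sub_div_two_conj (a b : ℂ) {u v : ℂ} (hu : u ≠ 0) (hv : v ≠ 0) :
    normSq (a / (2 * conj u) - b / (2 * conj v)) =
      normSq (a * conj v - b * conj u) / (4 * normSq u * normSq v) := by
  have hu' : conj u ≠ 0 := (map_ne_zero _).mpr hu
  have hv' : conj v ≠ 0 := (map_ne_zero _).mpr hv
  have common_denominator :
      a / (2 * conj u) - b / (2 * conj v) = (a * conj v - b * conj u) / (2 * conj u * conj v) := by
    field_simp
  rw [common_denominator, normSq_div, normSq_mul, normSq_mul, normSq_conj, normSq_conj]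
  norm_num [normSq_ofNat]

theorem stmt17_general (m₁ m₂ m₃ : ℝ)
    (z η : ℂ × ℂ × ℂ) (h12 : z.1 ≠ 0) (h31 : z.2.1 ≠ 0) (h23 : z.2.2 ≠ 0) :
    let Y : ℂ × ℂ × ℂ :=
      (η.1 / (2 * conj z.1), η.2.1 / (2 * conj z.2.1), η.2.2 / (2 * conj z.2.2))
    let ρ₁₂ : ℝ := Complex.normSq z.1
    let ρ₃₁ : ℝ := Complex.normSq z.2.1
    let ρ₂₃ : ℝ := Complex.normSq z.2.2
    let π₁ : ℂ := η.1 * conj z.2.1 - η.2.1 * conj z.1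
    let π₂ : ℂ := η.2.2 * conj z.1 - η.1 * conj z.2.2
    let π₃ : ℂ := η.2.1 * conj z.2.2 - η.2.2 * conj z.2.1
    KE m₁ m₂ m₃ Y =
      Complex.normSq π₁ / (8 * m₁ * ρ₁₂ * ρ₃₁) +
      Complex.normSq π₂ / (8 * m₂ * ρ₁₂ * ρ₂₃) +
      Complex.normSq π₃ / (8 * m₃ * ρ₃₁ * ρ₂₃) := by
  simp only [KE, normSq_div_two_conj_sub_div_two_conj _ _ h12 h31,
    normSq_div_two_conj_sub_div_two_conj _ _ h23 h12,
    normSq_div_two_conj_sub_div_two_conj _ _ h31 h23]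
  ring

/-- the kinetic energy after the three simultaneous Levi-Civita
transformations `Y_{ij} = η_{ij}/(2 conj(z_{ij}))`. -/
theorem stmt17 (m₁ m₂ m₃ : ℝ) (hm₁ : 0 < m₁) (hm₂ : 0 < m₂) (hm₃ : 0 < m₃)
    (z η : ℂ × ℂ × ℂ) (h12 : z.1 ≠ 0) (h31 : z.2.1 ≠ 0) (h23 : z.2.2 ≠ 0) :
    let Y : ℂ × ℂ × ℂ :=
      (η.1 / (2 * conj z.1), η.2.1 / (2 * conj z.2.1), η.2.2 / (2 * conj z.2.2))
    let ρ₁₂ : ℝ := Complex.normSq z.1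
    let ρ₃₁ : ℝ := Complex.normSq z.2.1
    let ρ₂₃ : ℝ := Complex.normSq z.2.2
    let π₁ : ℂ := η.1 * conj z.2.1 - η.2.1 * conj z.1
    let π₂ : ℂ := η.2.2 * conj z.1 - η.1 * conj z.2.2
    let π₃ : ℂ := η.2.1 * conj z.2.2 - η.2.2 * conj z.2.1
    KE m₁ m₂ m₃ Y =
      Complex.normSq π₁ / (8 * m₁ * ρ₁₂ * ρ₃₁) +
      Complex.normSq π₂ / (8 * m₂ * ρ₁₂ * ρ₂₃) +
      Complex.normSq π₃ / (8 * m₃ * ρ₃₁ * ρ₂₃) :=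
  stmt17_general m₁ m₂ m₃ z η h12 h31 h23
end
end

section
/- Let z ∈ C with z₁₂, z₃₁, z₂₃ all nonzero and let η ∈ ℂ³ satisfy ⟨η,z⟩₂ = 0. Define Y = (η₁₂/(2·conj(z₁₂)), η₃₁/(2·conj(z₃₁)), η₂₃/(2·conj(z₂₃))), X = (z₁₂², z₃₁², z₂₃²) ∈ W, ρᵢⱼ = |zᵢⱼ|², ‖z‖² = ρ₁₂+ρ₃₁+ρ₂₃, and λ(z) = 4·m₁m₂m₃·ρ₁₂ρ₃₁ρ₂₃·‖z‖²/(m·|X|⁴), where |X| is the mass norm. Then the pulled-back shape kinetic energy equals λ(z)⁻¹ times the Fubini–Study conorm on the cone: 2·|X|²·K(Y) = (1/λ(z))·|⟨η, z × conj(z)⟩₂|²/‖z‖², where z × conj(z) denotes the complex-bilinear cross product of z with its componentwise conjugate. -/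
noncomputable section
open Complex ComplexConjugate

/-- Standard Hermitian inner product on ℂ³. -/
def stdInner (v w : ℂ × ℂ × ℂ) : ℂ :=
  conj v.1 * w.1 + conj v.2.1 * w.2.1 + conj v.2.2 * w.2.2

/-! With `D = ⟨η, z × z̄⟩₂ = η̄ · (z × z̄)`, the quadruple-product expansion
`(a · (b × c)) d = (d · a)(b × c) + (d · b)(c × a) + (d · c)(a × b)` at `a = η̄, b = z, c = z̄, d = z`
loses two terms, since `z · η̄ = ⟨η, z⟩₂ = 0` and `z · z = 0` on the cone, leaving `D z = ‖z‖² (η̄ × z)`.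
The differences `Yᵢ - Yⱼ` are, up to conjugation, the components of `η̄ × z` divided by `2 z̄ᵢ z̄ⱼ`,
so `K(Y)` is `|D|²` times a rational function of the masses and the `ρᵢⱼ`, and the claim is an identity
of rational functions. -/

theorem stdInner_ccross_conj_smul (z η : ℂ × ℂ × ℂ)
    (hC : z.1 ^ 2 + z.2.1 ^ 2 + z.2.2 ^ 2 = 0) (hη : stdInner η z = 0) :
    stdInner η (ccross z (conj z.1, conj z.2.1, conj z.2.2)) • z =
      ((normSq z.1 + normSq z.2.1 + normSq z.2.2 : ℝ) : ℂ) •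
        ccross (conj η.1, conj η.2.1, conj η.2.2) z := by
  obtain ⟨a, b, c⟩ := z
  obtain ⟨p, q, r⟩ := η
  simp only [stdInner, ccross] at hη hC ⊢
  push_cast
  simp only [← mul_conj, Prod.smul_mk, smul_eq_mul, Prod.mk.injEq]
  refine ⟨?_, ?_, ?_⟩
  · linear_combination (b * conj c - c * conj b) * hη + (conj r * conj b - conj q * conj c) * hC
  · linear_combination (c * conj a - a * conj c) * hη + (conj p * conj c - conj r * conj a) * hC
  · linear_combination (a * conj b - b * conj a) * hη + (conj q * conj a - conj p * conj b) * hC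

theorem normSq_eq_of_mul_eq_ofReal_mul {D x w : ℂ} {n : ℝ} (hn : n ≠ 0)
    (h : D * x = n * w) : normSq w = normSq D * normSq x / n ^ 2 := by
  have := congrArg normSq h
  rw [normSq_mul, normSq_mul, normSq_ofReal] at this
  field_simp
  linear_combination -this

theorem normSq_div_two_conj_sub (p q x y : ℂ) (hx : x ≠ 0) (hy : y ≠ 0) :
    normSq (p / (2 * conj x) - q / (2 * conj y)) =
      normSq (conj p * y - conj q * x) / (4 * (normSq x * normSq y)) := by
  have e : p / (2 * conj x) - q / (2 * conj y) =
      conj (conj p * y - conj q * x) / (2 * conj (x * y)) := by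
    have hx' : conj x ≠ 0 := (map_ne_zero _).mpr hx
    have hy' : conj y ≠ 0 := (map_ne_zero _).mpr hy
    simp only [map_sub, map_mul, conj_conj]
    field_simp
  rw [e, normSq_div, normSq_conj, normSq_mul, normSq_conj, normSq_mul]
  norm_num [normSq_apply]

/-- the pulled-back shape kinetic energy equals `λ(z)⁻¹` times the
Fubini–Study conorm on the cone:
`2|X|²K(Y) = (1/λ(z))·|⟨η, z × conj z⟩₂|²/‖z‖²`. -/
theorem stmt19 (m₁ m₂ m₃ : ℝ) (hm₁ : 0 < m₁) (hm₂ : 0 < m₂) (hm₃ : 0 < m₃)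
    (z η : ℂ × ℂ × ℂ)
    (hC : z.1 ^ 2 + z.2.1 ^ 2 + z.2.2 ^ 2 = 0)
    (h12 : z.1 ≠ 0) (h31 : z.2.1 ≠ 0) (h23 : z.2.2 ≠ 0)
    (hη : stdInner η z = 0) :
    let Y : ℂ × ℂ × ℂ :=
      (η.1 / (2 * conj z.1), η.2.1 / (2 * conj z.2.1), η.2.2 / (2 * conj z.2.2))
    let X : ℂ × ℂ × ℂ := (z.1 ^ 2, z.2.1 ^ 2, z.2.2 ^ 2)
    let ρ₁₂ : ℝ := Complex.normSq z.1
    let ρ₃₁ : ℝ := Complex.normSq z.2.1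
    let ρ₂₃ : ℝ := Complex.normSq z.2.2
    let nz : ℝ := ρ₁₂ + ρ₃₁ + ρ₂₃
    let nX : ℝ := massSq m₁ m₂ m₃ X
    let lam : ℝ := 4 * m₁ * m₂ * m₃ * ρ₁₂ * ρ₃₁ * ρ₂₃ * nz / ((m₁ + m₂ + m₃) * nX ^ 2)
    2 * nX * KE m₁ m₂ m₃ Y =
      (1 / lam) *
        (Complex.normSq (stdInner η (ccross z (conj z.1, conj z.2.1, conj z.2.2))) / nz) := by
  obtain ⟨a, b, c⟩ := z
  obtain ⟨p, q, r⟩ := η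
  have key := stdInner_ccross_conj_smul (a, b, c) (p, q, r) hC hη
  set D := stdInner (p, q, r) (ccross (a, b, c) (conj a, conj b, conj c))
  simp only [ccross, Prod.smul_mk, smul_eq_mul, Prod.mk.injEq] at key h12 h31 h23 ⊢
  obtain ⟨ka, kb, kc⟩ := key
  have ha := normSq_pos.mpr h12
  have hb := normSq_pos.mpr h31
  have hc := normSq_pos.mpr h23
  have hnz : normSq a + normSq b + normSq c ≠ 0 := by positivity
  simp only [KE, normSq_div_two_conj_sub _ _ _ _ h12 h31, normSq_div_two_conj_sub _ _ _ _ h23 h12,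
    normSq_div_two_conj_sub _ _ _ _ h31 h23, normSq_eq_of_mul_eq_ofReal_mul hnz ka,
    normSq_eq_of_mul_eq_ofReal_mul hnz kb, normSq_eq_of_mul_eq_ofReal_mul hnz kc, massSq, map_pow]
  field_simp
  ring
end
end
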